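/- Let Λ be a folding on a double category D, let (Γ,Γ') be the connection pair associated to Λ by Γ(j) := (Λ^{j̄,1}_{j,1})^{-1}(i^v_{j̄}) and Γ'(j) := (Λ^{1,j}_{1,j̄})^{-1}(i^v_{j̄}), and let Λ₂ be the folding associated to (Γ,Γ') by Λ₂(α) := [Γ'(j) α Γ(k)]. Then Λ₂ = Λ. -/
import Mathlib


open CategoryTheory

universe w v u

/-- A (strict) double category whose vertical 1-category is the category `I`:
objects are those of `I`, vertical morphisms are the morphisms of `I`, and the
horizontal morphisms and squares carry the remaining structure. -/
structure DoubleCat (I : Type u) [Category.{w} I] where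
  Hor : I → I → Type v
  hId : (A : I) → Hor A A
  hComp : {A B C : I} → Hor A B → Hor B C → Hor A C
  hId_comp : ∀ {A B : I} (f : Hor A B), hComp (hId A) f = f
  hComp_hId : ∀ {A B : I} (f : Hor A B), hComp f (hId B) = f
  hComp_assoc : ∀ {A B C D : I} (f : Hor A B) (g : Hor B C) (h : Hor C D),
    hComp (hComp f g) h = hComp f (hComp g h)
  Sq : {A B C D : I} → Hor A B → Hor C D → (A ⟶ C) → (B ⟶ D) → Type v
  hSqComp : ∀ {A B C A' B' C' : I} {f₁ : Hor A B} {f₂ : Hor B C}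
    {g₁ : Hor A' B'} {g₂ : Hor B' C'} {j : A ⟶ A'} {k : B ⟶ B'} {l : C ⟶ C'},
    Sq f₁ g₁ j k → Sq f₂ g₂ k l → Sq (hComp f₁ f₂) (hComp g₁ g₂) j l
  vSqComp : ∀ {A B A' B' A'' B'' : I} {f : Hor A B} {g : Hor A' B'} {h : Hor A'' B''}
    {j₁ : A ⟶ A'} {k₁ : B ⟶ B'} {j₂ : A' ⟶ A''} {k₂ : B' ⟶ B''},
    Sq f g j₁ k₁ → Sq g h j₂ k₂ → Sq f h (j₁ ≫ j₂) (k₁ ≫ k₂)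
  hSqId : ∀ {A C : I} (j : A ⟶ C), Sq (hId A) (hId C) j j
  vSqId : ∀ {A B : I} (f : Hor A B), Sq f f (𝟙 A) (𝟙 B)
  hSqId_vcomp : ∀ {A C E : I} (j₁ : A ⟶ C) (j₂ : C ⟶ E),
    vSqComp (hSqId j₁) (hSqId j₂) = hSqId (j₁ ≫ j₂)
  vSqId_hcomp : ∀ {A B C : I} (f₁ : Hor A B) (f₂ : Hor B C),
    hSqComp (vSqId f₁) (vSqId f₂) = vSqId (hComp f₁ f₂)
  hSq_id_left : ∀ {A B A' B' : I} {f : Hor A B} {g : Hor A' B'} {j : A ⟶ A'} {k : B ⟶ B'}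
    (α : Sq f g j k), HEq (hSqComp (hSqId j) α) α
  hSq_id_right : ∀ {A B A' B' : I} {f : Hor A B} {g : Hor A' B'} {j : A ⟶ A'} {k : B ⟶ B'}
    (α : Sq f g j k), HEq (hSqComp α (hSqId k)) α
  hSq_assoc : ∀ {A B C D A' B' C' D' : I}
    {f₁ : Hor A B} {f₂ : Hor B C} {f₃ : Hor C D}
    {g₁ : Hor A' B'} {g₂ : Hor B' C'} {g₃ : Hor C' D'}
    {j : A ⟶ A'} {k : B ⟶ B'} {l : C ⟶ C'} {m : D ⟶ D'}
    (α : Sq f₁ g₁ j k) (β : Sq f₂ g₂ k l) (γ : Sq f₃ g₃ l m),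
    HEq (hSqComp (hSqComp α β) γ) (hSqComp α (hSqComp β γ))
  vSq_id_left : ∀ {A B A' B' : I} {f : Hor A B} {g : Hor A' B'} {j : A ⟶ A'} {k : B ⟶ B'}
    (α : Sq f g j k), HEq (vSqComp (vSqId f) α) α
  vSq_id_right : ∀ {A B A' B' : I} {f : Hor A B} {g : Hor A' B'} {j : A ⟶ A'} {k : B ⟶ B'}
    (α : Sq f g j k), HEq (vSqComp α (vSqId g)) α
  vSq_assoc : ∀ {A₀ B₀ A₁ B₁ A₂ B₂ A₃ B₃ : I}
    {f₀ : Hor A₀ B₀} {f₁ : Hor A₁ B₁} {f₂ : Hor A₂ B₂} {f₃ : Hor A₃ B₃}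
    {j₁ : A₀ ⟶ A₁} {k₁ : B₀ ⟶ B₁} {j₂ : A₁ ⟶ A₂} {k₂ : B₁ ⟶ B₂} {j₃ : A₂ ⟶ A₃} {k₃ : B₂ ⟶ B₃}
    (α : Sq f₀ f₁ j₁ k₁) (β : Sq f₁ f₂ j₂ k₂) (γ : Sq f₂ f₃ j₃ k₃),
    HEq (vSqComp (vSqComp α β) γ) (vSqComp α (vSqComp β γ))
  interchange : ∀ {A B C A' B' C' A'' B'' C'' : I}
    {f₁ : Hor A B} {f₂ : Hor B C} {g₁ : Hor A' B'} {g₂ : Hor B' C'}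
    {h₁ : Hor A'' B''} {h₂ : Hor B'' C''}
    {j₁ : A ⟶ A'} {k₁ : B ⟶ B'} {l₁ : C ⟶ C'}
    {j₂ : A' ⟶ A''} {k₂ : B' ⟶ B''} {l₂ : C' ⟶ C''}
    (α : Sq f₁ g₁ j₁ k₁) (β : Sq f₂ g₂ k₁ l₁) (γ : Sq g₁ h₁ j₂ k₂) (δ : Sq g₂ h₂ k₂ l₂),
    hSqComp (vSqComp α γ) (vSqComp β δ) = vSqComp (hSqComp α β) (hSqComp γ δ)
  hSqId_one : ∀ A : I, hSqId (𝟙 A) = vSqId (hId A)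

namespace DoubleCat

variable {I : Type u} [Category.{w} I] (D : DoubleCat.{w, v} I)

/-- Transport a square along equalities of its four boundary components. -/
def castSq {A B C E : I} {f f' : D.Hor A B} {g g' : D.Hor C E} {j j' : A ⟶ C} {k k' : B ⟶ E}
    (hf : f = f') (hg : g = g') (hj : j = j') (hk : k = k') :
    D.Sq f g j k → D.Sq f' g' j' k' := by
  subst hf; subst hg; subst hj; subst hk; exact id

/-- A holonomy on a double category: a 2-functor from the vertical 1-category to the
horizontal 2-category which is the identity on objects. -/
structure Holonomy where
  bar : {A C : I} → (A ⟶ C) → D.Hor A C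
  bar_id : ∀ A : I, bar (𝟙 A) = D.hId A
  bar_comp : ∀ {A C E : I} (j : A ⟶ C) (k : C ⟶ E), bar (j ≫ k) = D.hComp (bar j) (bar k)

/-- A folding on a double category: a holonomy together with bijections from squares
with boundary (top `f`, bottom `g`, left `j`, right `k`) to squares with identity
vertical sides, top `k̄ ∘ f` and bottom `g ∘ j̄`, satisfying the four folding axioms. -/
structure Folding extends D.Holonomy where
  fold : ∀ {A B C E : I} {f : D.Hor A B} {g : D.Hor C E} {j : A ⟶ C} {k : B ⟶ E},
    D.Sq f g j k → D.Sq (D.hComp f (bar k)) (D.hComp (bar j) g) (𝟙 A) (𝟙 E)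
  fold_bijective : ∀ {A B C E : I} (f : D.Hor A B) (g : D.Hor C E) (j : A ⟶ C) (k : B ⟶ E),
    Function.Bijective (fold (f := f) (g := g) (j := j) (k := k))
  fold_globular : ∀ {A B : I} {f g : D.Hor A B} (α : D.Sq f g (𝟙 A) (𝟙 B)),
    HEq (fold α) α
  fold_hcomp : ∀ {A B C A' B' C' : I} {f₁ : D.Hor A B} {f₂ : D.Hor B C}
    {g₁ : D.Hor A' B'} {g₂ : D.Hor B' C'} {j : A ⟶ A'} {k : B ⟶ B'} {l : C ⟶ C'}
    (α : D.Sq f₁ g₁ j k) (β : D.Sq f₂ g₂ k l),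
    HEq (fold (D.hSqComp α β))
      (D.vSqComp (D.hSqComp (D.vSqId f₁) (fold β))
        (D.castSq (D.hComp_assoc f₁ (bar k) g₂) rfl rfl rfl
          (D.hSqComp (fold α) (D.vSqId g₂))))
  fold_vcomp : ∀ {A B A' B' A'' B'' : I} {f : D.Hor A B} {g : D.Hor A' B'} {h : D.Hor A'' B''}
    {j₁ : A ⟶ A'} {k₁ : B ⟶ B'} {j₂ : A' ⟶ A''} {k₂ : B' ⟶ B''}
    (α : D.Sq f g j₁ k₁) (β : D.Sq g h j₂ k₂),
    HEq (fold (D.vSqComp α β))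
      (D.vSqComp (D.hSqComp (fold α) (D.vSqId (bar k₂)))
        (D.castSq (D.hComp_assoc (bar j₁) g (bar k₂)).symm rfl rfl rfl
          (D.hSqComp (D.vSqId (bar j₁)) (fold β))))
  fold_hSqId : ∀ {A C : I} (j : A ⟶ C), HEq (fold (D.hSqId j)) (D.vSqId (bar j))

/-- A connection pair on a double category: a holonomy together with squares
`conn j` (`Γ(j)`) and `conn' j` (`Γ'(j)`) satisfying identity preservation, the
transport laws, and the cancellation laws. -/
structure ConnectionPair extends D.Holonomy where
  conn : ∀ {A C : I} (j : A ⟶ C), D.Sq (bar j) (D.hId C) j (𝟙 C)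
  conn' : ∀ {A C : I} (j : A ⟶ C), D.Sq (D.hId A) (bar j) (𝟙 A) j
  conn_id : ∀ A : I, HEq (conn (𝟙 A)) (D.vSqId (D.hId A))
  conn'_id : ∀ A : I, HEq (conn' (𝟙 A)) (D.vSqId (D.hId A))
  conn_comp : ∀ {A C E : I} (j₁ : A ⟶ C) (j₂ : C ⟶ E),
    HEq (conn (j₁ ≫ j₂))
      (D.vSqComp (D.hSqComp (conn j₁) (D.vSqId (bar j₂)))
        (D.hSqComp (D.hSqId j₂) (conn j₂)))
  conn'_comp : ∀ {A C E : I} (j₁ : A ⟶ C) (j₂ : C ⟶ E),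
    HEq (conn' (j₁ ≫ j₂))
      (D.vSqComp (D.hSqComp (conn' j₁) (D.hSqId j₁))
        (D.hSqComp (D.vSqId (bar j₁)) (conn' j₂)))
  conn'_conn_h : ∀ {A C : I} (j : A ⟶ C),
    HEq (D.hSqComp (conn' j) (conn j)) (D.vSqId (bar j))
  conn'_conn_v : ∀ {A C : I} (j : A ⟶ C),
    HEq (D.vSqComp (conn' j) (conn j)) (D.hSqId j)

theorem castSq_heq {A B C E : I} {f f' : D.Hor A B} {g g' : D.Hor C E} {j j' : A ⟶ C}
    {k k' : B ⟶ E} (hf : f = f') (hg : g = g') (hj : j = j') (hk : k = k')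
    (α : D.Sq f g j k) : HEq (D.castSq hf hg hj hk α) α := by
  subst hf hg hj hk; rfl

theorem hSqComp_congr {A B C A' B' C' : I} {f₁ f₁' : D.Hor A B} {f₂ f₂' : D.Hor B C}
    {g₁ g₁' : D.Hor A' B'} {g₂ g₂' : D.Hor B' C'} {j j' : A ⟶ A'} {k k' : B ⟶ B'}
    {l l' : C ⟶ C'} {α : D.Sq f₁ g₁ j k} {α' : D.Sq f₁' g₁' j' k'}
    {β : D.Sq f₂ g₂ k l} {β' : D.Sq f₂' g₂' k' l'}
    (hf₁ : f₁ = f₁') (hf₂ : f₂ = f₂') (hg₁ : g₁ = g₁') (hg₂ : g₂ = g₂')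
    (hj : j = j') (hk : k = k') (hl : l = l') (hα : HEq α α') (hβ : HEq β β') :
    HEq (D.hSqComp α β) (D.hSqComp α' β') := by
  subst hf₁ hf₂ hg₁ hg₂ hj hk hl
  rw [eq_of_heq hα, eq_of_heq hβ]

theorem vSqComp_congr {A B A' B' A'' B'' : I} {f f' : D.Hor A B} {g g' : D.Hor A' B'}
    {h h' : D.Hor A'' B''} {j₁ j₁' : A ⟶ A'} {k₁ k₁' : B ⟶ B'} {j₂ j₂' : A' ⟶ A''}
    {k₂ k₂' : B' ⟶ B''} {α : D.Sq f g j₁ k₁} {α' : D.Sq f' g' j₁' k₁'}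
    {β : D.Sq g h j₂ k₂} {β' : D.Sq g' h' j₂' k₂'}
    (hf : f = f') (hg : g = g') (hh : h = h') (hj₁ : j₁ = j₁') (hk₁ : k₁ = k₁')
    (hj₂ : j₂ = j₂') (hk₂ : k₂ = k₂') (hα : HEq α α') (hβ : HEq β β') :
    HEq (D.vSqComp α β) (D.vSqComp α' β') := by
  subst hf hg hh hj₁ hk₁ hj₂ hk₂
  rw [eq_of_heq hα, eq_of_heq hβ]

theorem vSqId_congr {A B : I} {f f' : D.Hor A B} (h : f = f') :
    HEq (D.vSqId f) (D.vSqId f') := by subst h; rfl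

theorem hSqComp_id_left' {A B B' : I} {f : D.Hor A B} {g : D.Hor A B'} {k : B ⟶ B'}
    (α : D.Sq f g (𝟙 A) k) : HEq (D.hSqComp (D.vSqId (D.hId A)) α) α := by
  rw [← D.hSqId_one]; exact D.hSq_id_left α

theorem hSqComp_id_right' {A B C : I} {f : D.Hor A B} {g : D.Hor C B} {j : A ⟶ C}
    (α : D.Sq f g j (𝟙 B)) : HEq (D.hSqComp α (D.vSqId (D.hId B))) α := by
  rw [← D.hSqId_one]; exact D.hSq_id_right α

/-- Extensionality for foldings: equal holonomies and equal folds give equal foldings. -/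
theorem Folding.ext_of (F G : D.Folding)
    (h1 : ∀ {A C : I} (j : A ⟶ C), F.bar j = G.bar j)
    (h2 : ∀ {A B C E : I} {f : D.Hor A B} {g : D.Hor C E} {j : A ⟶ C} {k : B ⟶ E}
      (α : D.Sq f g j k), HEq (F.fold α) (G.fold α)) : F = G := by
  obtain ⟨⟨b1, bi1, bc1⟩, f1, p1, p2, p3, p4, p5⟩ := F
  obtain ⟨⟨b2, bi2, bc2⟩, f2, q1, q2, q3, q4, q5⟩ := G
  have hb : @b1 = @b2 := by
    funext A C j
    exact h1 j
  subst hb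
  have hf : @f1 = @f2 := by
    funext A B C E f g j k α
    exact eq_of_heq (h2 α)
  subst hf
  rfl

/-- Key computation: for a folding `Λ` and a connection pair `(Γ,Γ')` with the same
holonomy such that `Λ` folds `Γ(j)` and `Γ'(j)` to vertical identities, the fold of
any square `α` equals the pasting `[Γ'(j) α Γ(k)]`. -/
theorem fold_conn_pasting (Λ : D.Folding) (CP : D.ConnectionPair)
    (hbar : ∀ {A C : I} (j : A ⟶ C), CP.bar j = Λ.bar j)
    (hconn : ∀ {A C : I} (j : A ⟶ C), HEq (Λ.fold (CP.conn j)) (D.vSqId (Λ.bar j)))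
    (hconn' : ∀ {A C : I} (j : A ⟶ C), HEq (Λ.fold (CP.conn' j)) (D.vSqId (Λ.bar j)))
    {A B C E : I} {f : D.Hor A B} {g : D.Hor C E} {j : A ⟶ C} {k : B ⟶ E}
    (α : D.Sq f g j k) :
    HEq (Λ.fold α) (D.hSqComp (D.hSqComp (CP.conn' j) α) (CP.conn k)) := by
  set X := D.hSqComp (CP.conn' j) α with hXdef
  set β := D.hSqComp X (CP.conn k) with hβdef
  -- inner computation: folding [Γ'(j) α] gives (up to units) the fold of α
  have hX : HEq (Λ.fold X) (Λ.fold α) := by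
    refine (Λ.fold_hcomp (CP.conn' j) α).trans ?_
    refine HEq.trans ?_ (D.vSq_id_right (Λ.fold α))
    refine D.vSqComp_congr (D.hId_comp _) (D.hId_comp _)
      (by rw [Λ.bar_id, D.hId_comp, hbar]) rfl rfl rfl rfl
      (D.hSqComp_id_left' (Λ.fold α)) ?_
    refine (D.castSq_heq _ _ _ _ _).trans ?_
    refine HEq.trans ?_ (heq_of_eq (D.vSqId_hcomp (Λ.bar j) g))
    exact D.hSqComp_congr (D.hId_comp _) rfl (by rw [Λ.bar_id, D.hId_comp, hbar]) rfl
      rfl rfl rfl (hconn' j) HEq.rfl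
  -- outer computation: folding [X Γ(k)] gives (up to units) the fold of X
  have e1 : D.hComp (D.hComp (D.hId A) f) (D.hComp (CP.bar k) (Λ.bar (𝟙 E)))
      = D.hComp f (Λ.bar k) := by
    rw [Λ.bar_id, D.hComp_hId, D.hId_comp, hbar]
  have e2 : D.hComp (D.hComp (D.hId A) f) (D.hComp (Λ.bar k) (D.hId E))
      = D.hComp f (Λ.bar k) := by
    rw [D.hComp_hId, D.hId_comp]
  have e3 : D.hComp (D.hComp (Λ.bar (𝟙 A)) (D.hComp (CP.bar j) g)) (D.hId E)
      = D.hComp (Λ.bar j) g := by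
    rw [Λ.bar_id, D.hId_comp, D.hComp_hId, hbar]
  have hG1 : HEq (D.hSqComp (D.vSqId (D.hComp (D.hId A) f)) (Λ.fold (CP.conn k)))
      (D.vSqId (D.hComp f (Λ.bar k))) := by
    have e0 : D.hComp (D.hComp (D.hId A) f) (Λ.bar k) = D.hComp f (Λ.bar k) := by
      rw [D.hId_comp]
    refine HEq.trans ?_ (D.vSqId_congr e0)
    refine HEq.trans ?_ (heq_of_eq (D.vSqId_hcomp (D.hComp (D.hId A) f) (Λ.bar k)))
    exact D.hSqComp_congr rfl (by rw [Λ.bar_id, D.hComp_hId, hbar]) rfl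
      (D.hComp_hId _) rfl rfl rfl HEq.rfl (hconn k)
  have hβ : HEq (Λ.fold β) (Λ.fold α) := by
    refine (Λ.fold_hcomp X (CP.conn k)).trans ?_
    refine HEq.trans ?_ (D.vSq_id_left (Λ.fold α))
    exact D.vSqComp_congr e1 e2 e3 rfl rfl rfl rfl hG1
      ((D.castSq_heq _ _ _ _ _).trans ((D.hSqComp_id_right' (Λ.fold X)).trans hX))
  exact hβ.symm.trans (Λ.fold_globular β)

end DoubleCat

/-- Let `Λ` be a folding on a double category `D`, let `(Γ,Γ')` be the
connection pair associated to `Λ` by `Γ(j) := (Λ^{j̄,1}_{j,1})⁻¹(i^v_{j̄})` and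
`Γ'(j) := (Λ^{1,j}_{1,j̄})⁻¹(i^v_{j̄})`, and let `Λ₂` be the folding associated to
`(Γ,Γ')` by `Λ₂(α) := [Γ'(j) α Γ(k)]`.  Then `Λ₂ = Λ`. -/
theorem folding_connectionPair_folding {I : Type u} [Category.{w} I]
    (D : DoubleCat.{w, v} I) (Λ : D.Folding) (CP : D.ConnectionPair)
    (hbar : ∀ {A C : I} (j : A ⟶ C), CP.bar j = Λ.bar j)
    (hconn : ∀ {A C : I} (j : A ⟶ C), HEq (Λ.fold (CP.conn j)) (D.vSqId (Λ.bar j)))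
    (hconn' : ∀ {A C : I} (j : A ⟶ C), HEq (Λ.fold (CP.conn' j)) (D.vSqId (Λ.bar j)))
    (Λ₂ : D.Folding)
    (hbar₂ : ∀ {A C : I} (j : A ⟶ C), Λ₂.bar j = CP.bar j)
    (hfold₂ : ∀ {A B C E : I} {f : D.Hor A B} {g : D.Hor C E} {j : A ⟶ C} {k : B ⟶ E}
      (α : D.Sq f g j k),
      HEq (Λ₂.fold α) (D.hSqComp (D.hSqComp (CP.conn' j) α) (CP.conn k))) :
    Λ₂ = Λ := by
  refine DoubleCat.Folding.ext_of D Λ₂ Λ (fun j => (hbar₂ j).trans (hbar j)) ?_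
  intro A B C E f g j k α
  exact (hfold₂ α).trans (DoubleCat.fold_conn_pasting D Λ CP hbar hconn hconn' α).symm
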